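/- arXiv:0911.5098 — 2 statements merged into one kernel-verified Lean document; each statement's English description precedes it below -/
import Mathlib

section
/- Let T satisfy α‖f₁ − f₂‖² ≤ ‖T(f₁ − f₂)‖² for all f₁, f₂ ∈ A, with α > 0. Let f ∈ H, g = T f + e. Let f_A ∈ A satisfy ‖f − f_A‖ ≤ inf_{h∈A}‖f − h‖ + √δ, and let f_opt ∈ A satisfy ‖g − T f_opt‖² ≤ inf_{h∈A}‖g − T h‖² + ε. Then ‖f − f_opt‖ ≤ (2/√α)‖T(f − f_A) + e‖ + inf_{h∈A}‖f − h‖ + √ε/√α + √δ. -/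
/-!
Write `r = g - T f_A = T (f - f_A) + e` for the residual of the near-best approximation `f_A`.
Since `f_opt` nearly minimises the residual, `‖g - T f_opt‖ ≤ ‖r‖ + √ε`, so the triangle
inequality through `g` gives `‖T (f_A - f_opt)‖ ≤ 2 ‖r‖ + √ε`. Both points lie in `A`, where `T`
is bounded below by `√α`, hence `‖f_A - f_opt‖ ≤ (2 ‖r‖ + √ε) / √α`; the triangle inequality
through `f_A` and the near-optimality of `f_A` finish the bound.
-/

open Real

lemma Real.le_add_sqrt_of_sq_le_sq_add {a b ε : ℝ} (hb : 0 ≤ b) (h : a ^ 2 ≤ b ^ 2 + ε) :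
    a ≤ b + √ε := by
  have hε : ε ≤ √ε ^ 2 := by rw [sq_sqrt']; exact le_max_left _ _
  calc a ≤ √(b ^ 2 + ε) := le_sqrt_of_sq_le h
    _ ≤ b + √ε := (sqrt_le_left (by positivity)).2 (by nlinarith [sqrt_nonneg ε])

lemma Real.le_div_sqrt_of_mul_sq_le {α a b : ℝ} (hα : 0 < α) (hb : 0 ≤ b)
    (h : α * a ^ 2 ≤ b ^ 2) : a ≤ b / √α := by
  rw [le_div_iff₀ (sqrt_pos.2 hα)]
  calc a * √α ≤ |a| * √α := by gcongr; exact le_abs_self a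
    _ = √(α * a ^ 2) := by rw [sqrt_mul' _ (sq_nonneg a), sqrt_sq_eq_abs, mul_comm]
    _ ≤ b := (sqrt_le_left hb).2 h

theorem stmt_2_general {E F : Type*} [NormedAddCommGroup E] [InnerProductSpace ℝ E]
    [NormedAddCommGroup F] [InnerProductSpace ℝ F]
    (A : Set E) (T : E →L[ℝ] F) (α : ℝ) (hα : 0 < α)
    (hbi : ∀ f₁ ∈ A, ∀ f₂ ∈ A, α * ‖f₁ - f₂‖ ^ 2 ≤ ‖T (f₁ - f₂)‖ ^ 2)
    (f : E) (e : F) (g : F) (hg : g = T f + e)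
    (ε δ : ℝ)
    (fA : E) (hfA : fA ∈ A)
    (hfAnear : ‖f - fA‖ ≤ (⨅ h : A, ‖f - (h : E)‖) + Real.sqrt δ)
    (fopt : E) (hfopt : fopt ∈ A)
    (hoptnear : ‖g - T fopt‖ ^ 2 ≤ (⨅ h : A, ‖g - T (h : E)‖ ^ 2) + ε) :
    ‖f - fopt‖ ≤ (2 / Real.sqrt α) * ‖T (f - fA) + e‖ + (⨅ h : A, ‖f - (h : E)‖)
      + Real.sqrt ε / Real.sqrt α + Real.sqrt δ := by
  have hopt : ‖g - T fopt‖ ≤ ‖g - T fA‖ + √ε :=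
    le_add_sqrt_of_sq_le_sq_add (norm_nonneg _) <| hoptnear.trans <| by
      gcongr; exact ciInf_le ⟨0, Set.forall_mem_range.2 fun _ ↦ by positivity⟩ (⟨fA, hfA⟩ : A)
  have hT : ‖T (fA - fopt)‖ ≤ 2 * ‖g - T fA‖ + √ε := by
    calc ‖T (fA - fopt)‖ ≤ ‖g - T fA‖ + ‖g - T fopt‖ := by
          rw [map_sub, norm_sub_rev g (T fA)]; exact norm_sub_le_norm_sub_add_norm_sub _ _ _
      _ ≤ 2 * ‖g - T fA‖ + √ε := by linarith
  have hres : g - T fA = T (f - fA) + e := by rw [hg, map_sub]; abel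
  have hstab : ‖fA - fopt‖ ≤ ‖T (fA - fopt)‖ / √α :=
    le_div_sqrt_of_mul_sq_le hα (norm_nonneg _) (hbi fA hfA fopt hfopt)
  calc ‖f - fopt‖ ≤ ‖f - fA‖ + ‖fA - fopt‖ := norm_sub_le_norm_sub_add_norm_sub _ _ _
    _ ≤ (⨅ h : A, ‖f - (h : E)‖) + √δ + (2 * ‖T (f - fA) + e‖ + √ε) / √α := by
          gcongr; exact hstab.trans (by rw [← hres]; gcongr)
    _ = _ := by ring

theorem stmt_2 {E F : Type*} [NormedAddCommGroup E] [InnerProductSpace ℝ E] [CompleteSpace E]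
    [NormedAddCommGroup F] [InnerProductSpace ℝ F] [CompleteSpace F]
    (A : Set E) (hA : A.Nonempty) (T : E →L[ℝ] F) (α : ℝ) (hα : 0 < α)
    (hbi : ∀ f₁ ∈ A, ∀ f₂ ∈ A, α * ‖f₁ - f₂‖ ^ 2 ≤ ‖T (f₁ - f₂)‖ ^ 2)
    (f : E) (e : F) (g : F) (hg : g = T f + e)
    (ε δ : ℝ) (hε : 0 < ε) (hδ : 0 < δ)
    (fA : E) (hfA : fA ∈ A)
    (hfAnear : ‖f - fA‖ ≤ (⨅ h : A, ‖f - (h : E)‖) + Real.sqrt δ)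
    (fopt : E) (hfopt : fopt ∈ A)
    (hoptnear : ‖g - T fopt‖ ^ 2 ≤ (⨅ h : A, ‖g - T (h : E)‖ ^ 2) + ε) :
    ‖f - fopt‖ ≤ (2 / Real.sqrt α) * ‖T (f - fA) + e‖ + (⨅ h : A, ‖f - (h : E)‖)
      + Real.sqrt ε / Real.sqrt α + Real.sqrt δ :=
  stmt_2_general A T α hα hbi f e g hg ε δ fA hfA hfAnear fopt hfopt hoptnear
end

section
/- Suppose T is bi-Lipschitz on A with constants α, β, β ≤ 1/μ < 1.5α, and the Iterative Projection Algorithm uses εₙ-projections with εₙ → 0. Let f_opt^δ ∈ A be a δ-near minimizer of ‖g − T h‖ over h ∈ A. Then limsup_{n→∞} ‖f_opt^δ − fⁿ‖² ≤ c‖T(f − f_opt^δ) + e‖², where c = 4/(3α − 2/μ) and g = T f + e. -/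
open Filter RealInnerProductSpace

set_option maxHeartbeats 2000000 in
theorem stmt_15 {E F : Type*} [NormedAddCommGroup E] [InnerProductSpace ℝ E] [CompleteSpace E]
    [NormedAddCommGroup F] [InnerProductSpace ℝ F] [CompleteSpace F]
    (A : Set E) (hA : A.Nonempty) (T : E →L[ℝ] F) (α β μ : ℝ)
    (hα : 0 < α) (hμ : 0 < μ) (hαβ : α ≤ β) (hβμ : β ≤ 1 / μ) (hμα : 1 / μ < 1.5 * α)
    (hbi : ∀ f₁ ∈ A, ∀ f₂ ∈ A, α * ‖f₁ - f₂‖ ^ 2 ≤ ‖T (f₁ - f₂)‖ ^ 2 ∧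
      ‖T (f₁ - f₂)‖ ^ 2 ≤ β * ‖f₁ - f₂‖ ^ 2)
    (f : E) (e : F) (g : F) (hg : g = T f + e)
    (δ : ℝ) (hδ : 0 ≤ δ)
    (fopt : E) (hfopt : fopt ∈ A)
    (hoptnear : ‖g - T fopt‖ ^ 2 ≤ (⨅ h : A, ‖g - T (h : E)‖ ^ 2) + δ)
    (εs : ℕ → ℝ) (hεs : ∀ n, 0 ≤ εs n)
    (hεslim : Filter.Tendsto εs Filter.atTop (nhds 0))
    (fseq : ℕ → E) (hf0 : fseq 0 = 0)
    (hmem : ∀ n, fseq (n + 1) ∈ A)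
    (hproj : ∀ n, ‖(fseq n + μ • (ContinuousLinearMap.adjoint T) (g - T (fseq n))) - fseq (n + 1)‖ ^ 2 ≤
      (⨅ h : A, ‖(fseq n + μ • (ContinuousLinearMap.adjoint T) (g - T (fseq n))) - (h : E)‖ ^ 2) + εs n) :
    Filter.limsup (fun n => ‖fopt - fseq n‖ ^ 2) Filter.atTop ≤
      (4 / (3 * α - 2 / μ)) * ‖T (f - fopt) + e‖ ^ 2 := by
  haveI : Nonempty A := hA.to_subtype
  -- basic constants
  set s : ℝ := μ * α with hs_def
  have hs0 : 0 < s := by positivity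
  have hs23 : 2 / 3 < s := by
    rw [div_lt_iff₀ hμ] at hμα
    nlinarith
  have hs1 : s ≤ 1 := by
    have h1 : α ≤ 1 / μ := le_trans hαβ hβμ
    rw [le_div_iff₀ hμ] at h1
    nlinarith
  have hμβ : μ * β ≤ 1 := by
    rw [le_div_iff₀ hμ] at hβμ
    nlinarith
  set r : F := g - T fopt with hr
  have hrnorm : T (f - fopt) + e = r := by rw [hr, hg, map_sub]; abel
  set q : ℝ := 2 * (1 - s) / s with hq_def
  set c1 : ℝ := 1 - q with hc1_def
  have hc1_eq : c1 = (3 * s - 2) / s := by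
    rw [hc1_def, hq_def]; field_simp; ring
  have hc1pos : 0 < c1 := by
    rw [hc1_eq]; apply div_pos (by linarith) hs0
  have hq0 : 0 ≤ q := by
    rw [hq_def]; apply div_nonneg (by linarith) hs0.le
  have hq1 : q < 1 := by linarith
  set K : ℝ := 4 / α * ‖r‖ ^ 2 with hK_def
  have hK0 : 0 ≤ K := by positivity
  set x : ℕ → ℝ := fun n => ‖fopt - fseq n‖ ^ 2 with hx_def
  have hx0 : ∀ n, 0 ≤ x n := fun n => sq_nonneg _
  clear_value s q c1 K x r
  -- the key recursion
  have key : ∀ n, fseq n ∈ A → s * x (n + 1) ≤ 2 * (1 - s) * x n + 4 * μ * ‖r‖ ^ 2 + 2 * εs n := by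
    intro n hn
    set u : E := fseq n - fopt with hu
    set v : E := fseq (n + 1) - fopt with hv
    set a : E := fseq n + μ • (ContinuousLinearMap.adjoint T) (g - T (fseq n)) with ha
    have hinf : (⨅ h : A, ‖a - (h : E)‖ ^ 2) ≤ ‖a - fopt‖ ^ 2 :=
      ciInf_le ⟨0, by rintro y ⟨i, rfl⟩; exact sq_nonneg _⟩ (⟨fopt, hfopt⟩ : A)
    have h1 : ‖a - fseq (n + 1)‖ ^ 2 ≤ ‖a - fopt‖ ^ 2 + εs n :=
      (hproj n).trans (by linarith)
    have h2 : a - fseq (n + 1) = (a - fopt) - v := by rw [hv]; abel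
    have h3 : ‖v‖ ^ 2 ≤ 2 * ⟪a - fopt, v⟫ + εs n := by
      rw [h2, norm_sub_sq_real] at h1
      linarith
    have hz : g - T (fseq n) = r - T u := by
      rw [hr, hu, map_sub]; abel
    have h4 : a - fopt = u + μ • (ContinuousLinearMap.adjoint T) (r - T u) := by
      rw [ha, hz, hu]; abel
    have h5 : ⟪a - fopt, v⟫ = ⟪u, v⟫ + μ * ⟪r, T v⟫ - μ * ⟪T u, T v⟫ := by
      rw [h4, inner_add_left, real_inner_smul_left, ContinuousLinearMap.adjoint_inner_left]
      simp only [hu, inner_sub_left]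
      ring
    have h35 : ‖v‖ ^ 2 ≤ 2 * (⟪u, v⟫ + μ * ⟪r, T v⟫ - μ * ⟪T u, T v⟫) + εs n := by
      rw [← h5]; exact h3
    clear h1 h2 h3 h4 h5 hz hinf ha
    clear a
    clear_value u v
    have hd : u - v = fseq n - fseq (n + 1) := by rw [hu, hv]; abel
    have h6 : 2 * ⟪u, v⟫ = ‖u‖ ^ 2 + ‖v‖ ^ 2 - ‖fseq n - fseq (n + 1)‖ ^ 2 := by
      have h := norm_sub_sq_real u v
      rw [hd] at h
      linarith
    have h7 : 2 * ⟪T u, T v⟫ =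
        ‖T u‖ ^ 2 + ‖T v‖ ^ 2 - ‖T (fseq n - fseq (n + 1))‖ ^ 2 := by
      have h := norm_sub_sq_real (T u) (T v)
      have h' : T u - T v = T (fseq n - fseq (n + 1)) := by rw [← map_sub, hd]
      rw [h'] at h
      linarith
    have p5 : μ * (2 * ⟪T u, T v⟫) =
        μ * (‖T u‖ ^ 2 + ‖T v‖ ^ 2 - ‖T (fseq n - fseq (n + 1))‖ ^ 2) := by rw [h7]
    have h9 : ‖T (fseq n - fseq (n + 1))‖ ^ 2 ≤ β * ‖fseq n - fseq (n + 1)‖ ^ 2 :=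
      (hbi _ hn _ (hmem n)).2
    have p1 : μ * ‖T (fseq n - fseq (n + 1))‖ ^ 2 ≤ ‖fseq n - fseq (n + 1)‖ ^ 2 := by
      have h := mul_le_mul_of_nonneg_left h9 hμ.le
      have h2 : μ * β * ‖fseq n - fseq (n + 1)‖ ^ 2 ≤ 1 * ‖fseq n - fseq (n + 1)‖ ^ 2 :=
        mul_le_mul_of_nonneg_right hμβ (sq_nonneg _)
      linarith
    have h10 : α * ‖u‖ ^ 2 ≤ ‖T u‖ ^ 2 := by rw [hu]; exact (hbi _ hn _ hfopt).1
    have h11 : α * ‖v‖ ^ 2 ≤ ‖T v‖ ^ 2 := by rw [hv]; exact (hbi _ (hmem n) _ hfopt).1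
    have p2 : μ * (α * ‖u‖ ^ 2) ≤ μ * ‖T u‖ ^ 2 := mul_le_mul_of_nonneg_left h10 hμ.le
    have p3 : μ * (α * ‖v‖ ^ 2) ≤ μ * ‖T v‖ ^ 2 := mul_le_mul_of_nonneg_left h11 hμ.le
    have h12 : ⟪r, T v⟫ ≤ ‖r‖ * ‖T v‖ := real_inner_le_norm r (T v)
    have p4 : 2 * (μ * ⟪r, T v⟫) ≤ μ / 2 * ‖T v‖ ^ 2 + 2 * μ * ‖r‖ ^ 2 := by
      have e1 := mul_le_mul_of_nonneg_left h12 hμ.le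
      have e2 : 0 ≤ μ * (‖T v‖ - 2 * ‖r‖) ^ 2 := mul_nonneg hμ.le (sq_nonneg _)
      linarith [e1, e2]
    have hxu : x n = ‖u‖ ^ 2 := by simp only [hx_def]; rw [hu, norm_sub_rev]
    have hxv : x (n + 1) = ‖v‖ ^ 2 := by simp only [hx_def]; rw [hv, norm_sub_rev]
    rw [hxu, hxv, hs_def]
    linarith [h35, h6, p5, p1, p2, p3, p4]
  -- recursion in divided form
  have hrec : ∀ n, fseq n ∈ A → x (n + 1) ≤ q * x n + K + 2 / s * εs n := by
    intro n hn
    have hk := key n hn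
    have h := mul_le_mul_of_nonneg_left hk (le_of_lt (by positivity : (0:ℝ) < 1 / s))
    have e1 : 1 / s * (s * x (n + 1)) = x (n + 1) := by field_simp
    have e2 : 1 / s * (2 * (1 - s) * x n + 4 * μ * ‖r‖ ^ 2 + 2 * εs n) =
        q * x n + K + 2 / s * εs n := by
      rw [hq_def, hK_def, hs_def]
      field_simp
    rw [e1, e2] at h
    exact h
  have hmemn : ∀ n, 1 ≤ n → fseq n ∈ A := by
    intro n hn
    obtain ⟨k, rfl⟩ : ∃ k, n = k + 1 := ⟨n - 1, by omega⟩
    exact hmem k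
  -- eventual bound
  have main : ∀ η : ℝ, 0 < η → ∀ᶠ n in atTop, x n ≤ K / c1 + η := by
    intro η hη
    set B : ℝ := K / c1 + η with hB
    have hZ : c1 * (K / c1) = K := by field_simp
    obtain ⟨N, hN⟩ : ∃ N : ℕ, ∀ n ≥ N, 2 / s * εs n ≤ c1 * η / 2 := by
      have hev : ∀ᶠ n in atTop, εs n < c1 * η / 2 * (s / 2) :=
        hεslim.eventually_lt_const (by positivity)
      obtain ⟨N, hN⟩ := eventually_atTop.mp hev
      refine ⟨N, fun n hn => ?_⟩
      have h := (hN n hn).le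
      have h2 := mul_le_mul_of_nonneg_left h (le_of_lt (by positivity : (0:ℝ) < 2 / s))
      have : 2 / s * (c1 * η / 2 * (s / 2)) = c1 * η / 2 := by field_simp
      linarith
    set M : ℕ := max N 1 with hM
    -- invariant step
    have step1 : ∀ n, M ≤ n → x n ≤ B → x (n + 1) ≤ B := by
      intro n hn hxB
      have h := hrec n (hmemn n (le_trans (le_max_right N 1) hn))
      have hεn := hN n (le_trans (le_max_left N 1) hn)
      have hq_xB : q * x n ≤ q * B := mul_le_mul_of_nonneg_left hxB hq0
      have hqη : q * η ≤ 1 * η := mul_le_mul_of_nonneg_right hq1.le hη.le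
      rw [hB] at hq_xB ⊢
      have hexp : q * (K / c1 + η) = q * (K / c1) + q * η := by ring
      -- c1 = 1 - q, so q * (K/c1) = K/c1 - c1*(K/c1) = K/c1 - K
      have hqZ : q * (K / c1) = K / c1 - K := by
        have h' : q = 1 - c1 := by rw [hc1_def]; ring
        rw [h']; linarith [hZ]
      have hc1η : c1 * η = η - q * η := by rw [hc1_def]; ring
      linarith
    -- decrease step
    have step2 : ∀ n, M ≤ n → B < x n → x (n + 1) ≤ x n - c1 * η / 2 := by
      intro n hn hBlt
      have h := hrec n (hmemn n (le_trans (le_max_right N 1) hn))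
      have hεn := hN n (le_trans (le_max_left N 1) hn)
      have hc1x : c1 * B ≤ c1 * x n := mul_le_mul_of_nonneg_left hBlt.le hc1pos.le
      have hc1B : c1 * B = K + c1 * η := by rw [hB]; rw [mul_add, hZ]
      have hqx : q * x n = x n - c1 * x n := by rw [hc1_def]; ring
      linarith
    -- existence of an entry point
    have step3 : ∃ m, M ≤ m ∧ x m ≤ B := by
      by_contra hcon
      push_neg at hcon
      have hall : ∀ n, M ≤ n → B < x n := fun n hn => hcon n hn
      have hdec : ∀ k : ℕ, x (M + k) ≤ x M - k * (c1 * η / 2) := by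
        intro k
        induction k with
        | zero => simp
        | succ k ih =>
          have h := step2 (M + k) (by omega) (hall (M + k) (by omega))
          have : M + (k + 1) = (M + k) + 1 := by omega
          rw [this]
          push_cast
          linarith
      obtain ⟨k, hk⟩ := exists_nat_gt (x M / (c1 * η / 2))
      have hpos : (0:ℝ) < c1 * η / 2 := by positivity
      rw [div_lt_iff₀ hpos] at hk
      have := hdec k
      have := hx0 (M + k)
      linarith
    obtain ⟨m, hm, hxm⟩ := step3
    rw [eventually_atTop]
    refine ⟨m, fun n hn => ?_⟩
    induction n, hn using Nat.le_induction with
    | base => exact hxm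
    | succ n hn ih => exact step1 n (le_trans hm hn) ih
  -- conclude via limsup
  clear key hrec hproj hbi hoptnear hmem hmemn hεslim hεs hg hf0
  have hco : IsCoboundedUnder (· ≤ ·) atTop x :=
    isCoboundedUnder_le_of_le atTop (fun n => hx0 n)
  have hls : ∀ η : ℝ, 0 < η → limsup x atTop ≤ K / c1 + η := fun η hη =>
    limsup_le_of_le hco (main η hη)
  clear main hco
  have hfinal : limsup x atTop ≤ K / c1 := by
    obtain ⟨L, hL⟩ : ∃ L, limsup x atTop = L := ⟨_, rfl⟩
    rw [hL] at hls ⊢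
    by_contra hcon
    push_neg at hcon
    have hη : 0 < (L - K / c1) / 2 := by linarith
    have h := hls _ hη
    linarith
  have hgoal : (4 / (3 * α - 2 / μ)) * ‖T (f - fopt) + e‖ ^ 2 = K / c1 := by
    have hμα' : 2 / 3 < μ * α := by rw [← hs_def]; exact hs23
    have h32 : (0:ℝ) < 3 * (μ * α) - 2 := by linarith
    have hd2 : 3 * α - 2 / μ = (3 * (μ * α) - 2) / μ := by field_simp
    have key2 : 4 / (3 * α - 2 / μ) = 4 / α / c1 := by
      rw [hc1_eq, hs_def, hd2, div_div_eq_mul_div, div_div_eq_mul_div]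
      have hnum : 4 / α * (μ * α) = 4 * μ := by field_simp
      rw [hnum]
    rw [hrnorm, hK_def, key2]
    ring
  rw [hgoal]
  exact hfinal
end
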